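/- arXiv:math-ph/0609076 — 4 statements merged into one kernel-verified Lean document; each statement's English description precedes it below -/
import Mathlib

section
/- For triples δ = (a_1,a_2,a_3) and δ' = (b_1,b_2,b_3) of vectors in ℝ³ with masses m_i > 0, define the mass inner product ⟨δ,δ'⟩ = Σ m_i a_i·b_i, the cross product δ×δ' = Σ m_i a_i×b_i ∈ ℝ³, and the Gram determinant |δ∧δ'|² = |δ|²|δ'|² - ⟨δ,δ'⟩². Then |δ∧δ'|² ≥ |δ×δ'|²; in particular, for a motion δ(t) with moment of inertia I = |δ|², kinetic energy T = (1/2)|δ̇|², and angular momentum Ω = δ×δ̇, one has 2IT - (1/4)İ² = |δ∧δ̇|² ≥ |Ω|². -/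
/-!
Expanding the products of sums, the Gram determinant minus `‖∑ mᵢ aᵢ × bᵢ‖²` is the double sum
`∑ᵢⱼ mᵢ mⱼ (‖aᵢ‖²‖bⱼ‖² - ⟪aᵢ,bᵢ⟫⟪aⱼ,bⱼ⟫ - ⟪aᵢ × bᵢ, aⱼ × bⱼ⟫)`. After symmetrizing in `(i, j)`
every term is nonnegative: by Lagrange's identity the 4-vector `(⟪a,b⟫, a × b)` has norm `‖a‖‖b‖`,
so Cauchy–Schwarz and AM–GM give
`⟪a,b⟫⟪c,d⟫ + ⟪a × b, c × d⟫ ≤ (‖a‖²‖d‖² + ‖c‖²‖b‖²) / 2`.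
-/

noncomputable section
open Finset

abbrev E3 : Type := EuclideanSpace ℝ (Fin 3)

def cross3 (u v : E3) : E3 :=
  (WithLp.equiv 2 (Fin 3 → ℝ)).symm
    ![u 1 * v 2 - u 2 * v 1, u 2 * v 0 - u 0 * v 2, u 0 * v 1 - u 1 * v 0]

open scoped RealInnerProductSpace Matrix

lemma cross3_eq_toLp_crossProduct (u v : E3) :
    cross3 u v = WithLp.toLp 2 (WithLp.ofLp u ⨯₃ WithLp.ofLp v) := by
  simp [cross3, cross_apply]

lemma inner_cross3_cross3 (u v w x : E3) :
    ⟪cross3 u v, cross3 w x⟫ = ⟪u, w⟫ * ⟪v, x⟫ - ⟪u, x⟫ * ⟪v, w⟫ := by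
  simp only [cross3_eq_toLp_crossProduct, EuclideanSpace.inner_eq_star_dotProduct, star_trivial,
    dotProduct_comm (WithLp.ofLp w ⨯₃ _), cross_dot_cross]
  simp only [dotProduct_comm]

lemma norm_cross3_sq_add_inner_sq (u v : E3) :
    ‖cross3 u v‖ ^ 2 + ⟪u, v⟫ ^ 2 = ‖u‖ ^ 2 * ‖v‖ ^ 2 := by
  rw [← real_inner_self_eq_norm_sq, inner_cross3_cross3, real_inner_self_eq_norm_sq,
    real_inner_self_eq_norm_sq, real_inner_comm v u]
  ring

lemma inner_mul_inner_add_inner_cross3_le (a b c d : E3) :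
    ⟪a, b⟫ * ⟪c, d⟫ + ⟪cross3 a b, cross3 c d⟫ ≤ (‖a‖ ^ 2 * ‖d‖ ^ 2 + ‖c‖ ^ 2 * ‖b‖ ^ 2) / 2 := by
  have hab := norm_cross3_sq_add_inner_sq a b
  have hcd := norm_cross3_sq_add_inner_sq c d
  have hcs : ⟪a, b⟫ * ⟪c, d⟫ + ‖cross3 a b‖ * ‖cross3 c d‖ ≤ ‖a‖ * ‖b‖ * (‖c‖ * ‖d‖) := by
    refine abs_le_of_sq_le_sq' ?_ (by positivity) |>.2
    nlinarith [sq_nonneg (⟪a, b⟫ * ‖cross3 c d‖ - ⟪c, d⟫ * ‖cross3 a b‖)]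
  nlinarith [real_inner_le_norm (cross3 a b) (cross3 c d), two_mul_le_add_sq (‖a‖ * ‖d‖) (‖c‖ * ‖b‖)]

lemma sum_sum_nonneg_of_add_swap_nonneg {ι : Type*} [Fintype ι] (f : ι → ι → ℝ)
    (hf : ∀ i j, 0 ≤ f i j + f j i) : 0 ≤ ∑ i, ∑ j, f i j := by
  have hsym : 2 * ∑ i, ∑ j, f i j = ∑ i, ∑ j, (f i j + f j i) := by
    rw [two_mul]
    nth_rewrite 2 [sum_comm]
    simp only [sum_add_distrib]
  have hnonneg : 0 ≤ ∑ i, ∑ j, (f i j + f j i) := sum_nonneg fun i _ => sum_nonneg fun j _ => hf i j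
  linarith

theorem norm_sum_smul_cross3_sq_le {ι : Type*} [Fintype ι] (m : ι → ℝ) (hm : ∀ i, 0 ≤ m i)
    (a b : ι → E3) :
    ‖∑ i, m i • cross3 (a i) (b i)‖ ^ 2
      ≤ (∑ i, m i * ‖a i‖ ^ 2) * (∑ i, m i * ‖b i‖ ^ 2) - (∑ i, m i * ⟪a i, b i⟫) ^ 2 := by
  rw [← sub_nonneg]
  have hexpand : (∑ i, m i * ‖a i‖ ^ 2) * (∑ i, m i * ‖b i‖ ^ 2) - (∑ i, m i * ⟪a i, b i⟫) ^ 2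
      - ‖∑ i, m i • cross3 (a i) (b i)‖ ^ 2
      = ∑ i, ∑ j, m i * m j * (‖a i‖ ^ 2 * ‖b j‖ ^ 2 - ⟪a i, b i⟫ * ⟪a j, b j⟫
          - ⟪cross3 (a i) (b i), cross3 (a j) (b j)⟫) := by
    simp only [← real_inner_self_eq_norm_sq (∑ i, _), sum_inner, inner_sum, real_inner_smul_left,
      real_inner_smul_right, sq (∑ i, _), sum_mul_sum, ← sum_sub_distrib]
    refine sum_congr rfl fun i _ => sum_congr rfl fun j _ => ?_
    rw [real_inner_comm (cross3 (a j) (b j)) (cross3 (a i) (b i))]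
    ring
  rw [hexpand]
  refine sum_sum_nonneg_of_add_swap_nonneg _ fun i j => ?_
  have hpair := inner_mul_inner_add_inner_cross3_le (a i) (b i) (a j) (b j)
  rw [real_inner_comm (cross3 (a i) (b i)) (cross3 (a j) (b j)), mul_comm (m j), ← mul_add]
  exact mul_nonneg (mul_nonneg (hm i) (hm j)) (by linarith)

/-- for triples `δ, δ'` of vectors in ℝ³ with masses `mᵢ > 0`,
the Gram determinant `|δ∧δ'|² = |δ|²|δ'|² - ⟨δ,δ'⟩²` (mass inner product)
dominates `|δ×δ'|²`; in particular, with `I = |δ|²`, `T = ½|δ'|²`,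
`İ = 2⟨δ,δ'⟩` and `Ω = δ×δ'`, one has `2IT - İ²/4 = |δ∧δ'|² ≥ |Ω|²`. -/
theorem gram_ge_cross
    (m : Fin 3 → ℝ) (hm : ∀ i, 0 < m i)
    (δ δ' : Fin 3 → E3) :
    ((∑ i, m i * ‖δ i‖ ^ 2) * (∑ i, m i * ‖δ' i‖ ^ 2)
        - (∑ i, m i * (inner ℝ (δ i) (δ' i) : ℝ)) ^ 2
      ≥ ‖∑ i, m i • cross3 (δ i) (δ' i)‖ ^ 2) ∧
    (2 * (∑ i, m i * ‖δ i‖ ^ 2) * (((1 : ℝ)/2) * (∑ i, m i * ‖δ' i‖ ^ 2))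
        - ((1 : ℝ)/4) * (2 * (∑ i, m i * (inner ℝ (δ i) (δ' i) : ℝ))) ^ 2
      = (∑ i, m i * ‖δ i‖ ^ 2) * (∑ i, m i * ‖δ' i‖ ^ 2)
        - (∑ i, m i * (inner ℝ (δ i) (δ' i) : ℝ)) ^ 2) :=
  ⟨norm_sum_smul_cross3_sq_le m (fun i => (hm i).le) δ δ', by ring⟩
end
end

section
/- The identity Σ_{i=1}^3 (1 - m_i) b_i = 0 holds, where b_1 = (1,0,0), b_2 = (cos β_3, sin β_3, 0), b_3 = (cos β_2, -sin β_2, 0), and cos β_i = (m̂_i - m_i)/(m̂_i + m_i), sin β_i = 2√(m_1m_2m_3)/(m̂_i + m_i), with m̂_i = m_j m_k and m_1 + m_2 + m_3 = 1. -/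
noncomputable section

/-- the identity `Σᵢ (1 - mᵢ) bᵢ = 0` for the binary collision
points `b₁ = (1,0,0)`, `b₂ = (cos β₃, sin β₃, 0)`, `b₃ = (cos β₂, -sin β₂, 0)`
with `cos βᵢ = (m̂ᵢ - mᵢ)/(m̂ᵢ + mᵢ)`, `sin βᵢ = 2√(m₁m₂m₃)/(m̂ᵢ + mᵢ)`,
`m̂ᵢ = mⱼ m_k`, and `m₁ + m₂ + m₃ = 1`. -/
theorem weighted_collision_points_sum_zero
    (m1 m2 m3 : ℝ) (h1 : 0 < m1) (h2 : 0 < m2) (h3 : 0 < m3)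
    (hsum : m1 + m2 + m3 = 1) :
    (1 - m1) • (![1, 0, 0] : Fin 3 → ℝ)
      + (1 - m2) • (![(m1 * m2 - m3) / (m1 * m2 + m3),
          2 * Real.sqrt (m1 * m2 * m3) / (m1 * m2 + m3), 0] : Fin 3 → ℝ)
      + (1 - m3) • (![(m3 * m1 - m2) / (m3 * m1 + m2),
          -(2 * Real.sqrt (m1 * m2 * m3) / (m3 * m1 + m2)), 0] : Fin 3 → ℝ)
      = 0 := by
  have hA : m1 * m2 + m3 ≠ 0 := by positivity
  have hB : m3 * m1 + m2 ≠ 0 := by positivity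
  have hm3 : m3 = 1 - m1 - m2 := by linarith
  subst hm3
  funext i
  fin_cases i <;>
    simp [Matrix.cons_val_zero, Matrix.cons_val_one] <;>
    field_simp <;> ring
end
end

section
/- (Sundman) Suppose I : (0,t_0] → (0,∞) is C², İ > 0 on (0,t_0), I(t) → 0 as t → 0⁺, and along the motion İ·Ï ≥ (İ/I)·C + 2h·İ where C(t) ≥ C_0 ≥ 0 for all t and h ∈ ℝ is a constant. Then C_0 = 0; i.e., inf C = 0. In particular, if C(t) = |δ∧δ̇|² ≥ |Ω|² is bounded below by the constant squared norm of the angular momentum, the angular momentum Ω of a triple-collision motion must vanish. -/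
noncomputable section

/-! Along the motion the Sundman energy `½ İ² − C₀ log I − 2h I` is nondecreasing, since its
derivative is at least `(İ / I) (C − C₀) ≥ 0`. Bounding it by its value at a fixed time `t₁`
and dropping `½ İ² ≥ 0` gives `C₀ log I + 2h I ≥ const` near `0`; as `I → 0⁺` the logarithm
tends to `−∞`, which forces `C₀ ≤ 0`. -/

open Real Filter Set Topology

theorem nonpos_of_eventually_le_mul_log_add {α : Type*} {l : Filter α} [l.NeBot]
    {I : α → ℝ} {c b m : ℝ} (hI : Tendsto I l (𝓝[>] 0))
    (hbdd : ∀ᶠ t in l, m ≤ c * log (I t) + b * I t) : c ≤ 0 := by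
  by_contra! hc
  have hbot : Tendsto (fun t => c * log (I t) + b * I t) l atBot :=
    ((tendsto_log_nhdsGT_zero.comp hI).const_mul_atBot hc).atBot_add
      ((hI.mono_right nhdsWithin_le_nhds).const_mul b)
  obtain ⟨t, hlt, hge⟩ := ((hbot.eventually (eventually_lt_atBot m)).and hbdd).exists
  linarith

def sundmanEnergy (C0 h : ℝ) (I I' : ℝ → ℝ) (t : ℝ) : ℝ :=
  I' t ^ 2 / 2 - C0 * log (I t) - 2 * h * I t

section SundmanEnergy

variable {a b C0 h : ℝ} {I I' I'' C : ℝ → ℝ}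

theorem hasDerivAt_sundmanEnergy {t : ℝ} (hIt : 0 < I t) (hd1 : HasDerivAt I (I' t) t)
    (hd2 : HasDerivAt I' (I'' t) t) :
    HasDerivAt (sundmanEnergy C0 h I I')
      (I' t * I'' t - C0 * (I' t / I t) - 2 * h * I' t) t := by
  have hE := (((hd2.pow 2).div_const 2).sub ((hd1.log hIt.ne').const_mul C0)).sub
    (hd1.const_mul (2 * h))
  exact hE.congr_deriv (by push_cast; ring)

theorem monotoneOn_sundmanEnergy (hIpos : ∀ t ∈ Ioo a b, 0 < I t)
    (hd1 : ∀ t ∈ Ioo a b, HasDerivAt I (I' t) t)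
    (hd2 : ∀ t ∈ Ioo a b, HasDerivAt I' (I'' t) t)
    (hI'nonneg : ∀ t ∈ Ioo a b, 0 ≤ I' t)
    (hineq : ∀ t ∈ Ioo a b, I' t * I'' t ≥ (I' t / I t) * C t + 2 * h * I' t)
    (hC : ∀ t ∈ Ioo a b, C0 ≤ C t) :
    MonotoneOn (sundmanEnergy C0 h I I') (Ioo a b) := by
  have hderiv : ∀ t ∈ Ioo a b, HasDerivAt (sundmanEnergy C0 h I I')
      (I' t * I'' t - C0 * (I' t / I t) - 2 * h * I' t) t :=
    fun t ht => hasDerivAt_sundmanEnergy (hIpos t ht) (hd1 t ht) (hd2 t ht)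
  refine monotoneOn_of_hasDerivWithinAt_nonneg (convex_Ioo a b)
    (f' := fun t => I' t * I'' t - C0 * (I' t / I t) - 2 * h * I' t)
    (fun t ht => (hderiv t ht).continuousAt.continuousWithinAt) ?_ ?_
  · rw [interior_Ioo]
    exact fun t ht => (hderiv t ht).hasDerivWithinAt
  · rw [interior_Ioo]
    intro t ht
    have hratio : 0 ≤ I' t / I t := div_nonneg (hI'nonneg t ht) (hIpos t ht).le
    nlinarith [hineq t ht, mul_le_mul_of_nonneg_left (hC t ht) hratio]

end SundmanEnergy

/-- Sundman: if `I : (0, t₀] → (0, ∞)` is twice differentiable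
with `İ > 0` on `(0, t₀)`, `I(t) → 0` as `t → 0⁺`, and
`İ·Ï ≥ (İ/I)·C + 2h·İ` where `C(t) ≥ C₀ ≥ 0`, then `C₀ = 0`.  In particular,
taking `C = |δ∧δ̇|² ≥ |Ω|²`, the angular momentum of a triple-collision
motion must vanish. -/
theorem sundman_vanishing_angular_momentum
    (t0 h C0 : ℝ) (ht0 : 0 < t0)
    (I I' I'' C : ℝ → ℝ)
    (hIpos : ∀ t ∈ Set.Ioc 0 t0, 0 < I t)
    (hd1 : ∀ t ∈ Set.Ioo 0 t0, HasDerivAt I (I' t) t)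
    (hd2 : ∀ t ∈ Set.Ioo 0 t0, HasDerivAt I' (I'' t) t)
    (hI'pos : ∀ t ∈ Set.Ioo 0 t0, 0 < I' t)
    (hlim : Filter.Tendsto I (nhdsWithin 0 (Set.Ioi 0)) (nhds 0))
    (hineq : ∀ t ∈ Set.Ioo 0 t0, I' t * I'' t ≥ (I' t / I t) * C t + 2 * h * I' t)
    (hC : ∀ t ∈ Set.Ioo 0 t0, C0 ≤ C t)
    (hC0 : 0 ≤ C0) :
    C0 = 0 := by
  have hmono : MonotoneOn (sundmanEnergy C0 h I I') (Ioo 0 t0) :=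
    monotoneOn_sundmanEnergy (fun t ht => hIpos t (Ioo_subset_Ioc_self ht)) hd1 hd2
      (fun t ht => (hI'pos t ht).le) hineq hC
  have hI : Tendsto I (𝓝[>] 0) (𝓝[>] 0) :=
    tendsto_nhdsWithin_iff.2 ⟨hlim, by filter_upwards [Ioc_mem_nhdsGT ht0] using hIpos⟩
  obtain ⟨t1, ht1⟩ : (Ioo 0 t0).Nonempty := nonempty_Ioo.2 ht0
  have hbdd : ∀ᶠ t in 𝓝[>] 0,
      -sundmanEnergy C0 h I I' t1 ≤ C0 * log (I t) + 2 * h * I t := by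
    filter_upwards [Ioo_mem_nhdsGT ht1.1] with t ht
    have hle := hmono ⟨ht.1, ht.2.trans ht1.2⟩ ht1 ht.2.le
    unfold sundmanEnergy at hle ⊢
    linarith [sq_nonneg (I' t)]
  exact le_antisymm (nonpos_of_eventually_le_mul_log_add hI hbdd) hC0
end
end

section
/- Let q ∈ ℝ \ {0,1,2,...} and suppose f : (0,t_0) → ℝ is m times differentiable with f(t)/t^q → f_0 ≠ 0 as t → 0⁺. Set g(t) = t^{-q} f(t). Then the following are equivalent: (a) for all 1 ≤ k ≤ m, t^k g^{(k)}(t) → 0 as t → 0⁺; (b) for all 1 ≤ k ≤ m, f^{(k)}(t) / (d^k/dt^k)(f_0 t^q) → 1 as t → 0⁺. -/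
/-!
Write `f = g · t^q` with `g = f / t^q`. By Leibniz' rule,
`f⁽ᵏ⁾(t) = t^(q-k) · ∑_{i ≤ k} C(k,i) · q(q-1)⋯(q-k+i+1) · tⁱ g⁽ⁱ⁾(t)`,
so `f⁽ᵏ⁾(t) / (f₀ q(q-1)⋯(q-k+1) t^(q-k)) → 1` iff the sum tends to `q(q-1)⋯(q-k+1) f₀`, the
limit of its `i = 0` term; here `q ∉ ℕ` makes the normalising constant nonzero. The coefficient
of `tᵏ g⁽ᵏ⁾(t)` in the `k`-th sum is `1`, so by induction on `k` all these sums have that limit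
exactly when `tⁱ g⁽ⁱ⁾(t) → 0` for `1 ≤ i ≤ m`.
-/

open Filter Topology Set Finset

section Triangular

variable {α R : Type*} [Ring R] [TopologicalSpace R] [IsTopologicalRing R] {l : Filter α}
  {a : ℕ → α → R} {L : R}

theorem tendsto_sum_range_mul_of_tendsto_zero (c : ℕ → R) (n : ℕ)
    (ha0 : Tendsto (a 0) l (𝓝 L)) (ha : ∀ i, 1 ≤ i → i ≤ n → Tendsto (a i) l (𝓝 0)) :
    Tendsto (fun x => ∑ i ∈ range (n + 1), c i * a i x) l (𝓝 (c 0 * L)) := by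
  have htail : Tendsto (fun x => ∑ i ∈ range n, c (i + 1) * a (i + 1) x) l (𝓝 0) := by
    simpa using tendsto_finsetSum (range n) fun i hi =>
      (ha (i + 1) (by omega) (by simp at hi; omega)).const_mul (c (i + 1))
  simpa only [sum_range_succ', zero_add] using htail.add (ha0.const_mul (c 0))

theorem tendsto_zero_iff_tendsto_triangular_sum (c : ℕ → ℕ → R) (hc : ∀ k, c k k = 1)
    (ha0 : Tendsto (a 0) l (𝓝 L)) (m : ℕ) :
    (∀ k, 1 ≤ k → k ≤ m → Tendsto (a k) l (𝓝 0)) ↔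
      ∀ k, 1 ≤ k → k ≤ m →
        Tendsto (fun x => ∑ i ∈ range (k + 1), c k i * a i x) l (𝓝 (c k 0 * L)) := by
  refine ⟨fun ha k _ hkm => tendsto_sum_range_mul_of_tendsto_zero (c k) k ha0
    fun i hi hik => ha i hi (hik.trans hkm), fun hS k => ?_⟩
  induction k using Nat.strong_induction_on with
  | _ k IH =>
  intro hk hkm
  obtain ⟨n, rfl⟩ : ∃ n, k = n + 1 := ⟨k - 1, by omega⟩
  have hlower := tendsto_sum_range_mul_of_tendsto_zero (c (n + 1)) n ha0
    fun i hi hin => IH i (by omega) hi (by omega)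
  simpa only [sum_range_succ _ (n + 1), hc, one_mul, add_sub_cancel_left, sub_self]
    using (hS (n + 1) hk hkm).sub hlower

end Triangular

theorem tendsto_div_const_iff₀ {α G : Type*} [GroupWithZero G] [TopologicalSpace G]
    [ContinuousMul G] {b : G} (hb : b ≠ 0) {c : G} {f : α → G} {l : Filter α} :
    Tendsto (f · / b) l (𝓝 (c / b)) ↔ Tendsto f l (𝓝 c) := by
  simp only [div_eq_mul_inv]
  exact ((Homeomorph.mulRight₀ b⁻¹ (inv_ne_zero hb)).isInducing.tendsto_nhds_iff).symm

theorem iteratedDerivWithin_rpow_const {s : Set ℝ} (hs : UniqueDiffOn ℝ s) {x : ℝ} (hx : x ∈ s)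
    (hx0 : x ≠ 0) (q : ℝ) (k : ℕ) :
    iteratedDerivWithin k (fun t => t ^ q) s x = (descPochhammer ℝ k).eval q * x ^ (q - k) := by
  rw [iteratedDerivWithin_eq_iteratedDeriv hs (Real.contDiffAt_rpow_const_of_ne hx0) hx,
    iteratedDeriv_eq_iterate, Real.iter_deriv_rpow_const]

theorem iteratedDerivWithin_eq_rpow_mul_sum {s : Set ℝ} (hs : UniqueDiffOn ℝ s)
    (hs0 : s ⊆ Ioi 0) {f : ℝ → ℝ} {k : ℕ} (hf : ContDiffOn ℝ k f s) {x : ℝ} (hx : x ∈ s)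
    (q : ℝ) :
    iteratedDerivWithin k f s x = x ^ (q - k) * ∑ i ∈ range (k + 1),
      k.choose i * (descPochhammer ℝ (k - i)).eval q *
        (x ^ i * iteratedDerivWithin i (fun t => f t / t ^ q) s x) := by
  set g := fun t => f t / t ^ q
  have hpos : ∀ t ∈ s, 0 < t := hs0
  have hfg : EqOn f (g * fun t => t ^ q) s := fun t ht =>
    (div_mul_cancel₀ (f t) (Real.rpow_pos_of_pos (hpos t ht) q).ne').symm
  have hrpow : ContDiffWithinAt ℝ k (fun t => t ^ q) s x :=
    (Real.contDiffAt_rpow_const_of_ne (hpos x hx).ne').contDiffWithinAt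
  have hg : ContDiffWithinAt ℝ k g s x :=
    (hf x hx).div hrpow (Real.rpow_pos_of_pos (hpos x hx) q).ne'
  rw [iteratedDerivWithin_congr hfg hx, iteratedDerivWithin_mul hx hs hg hrpow, mul_sum]
  refine sum_congr rfl fun i hi => ?_
  have hik : i ≤ k := Nat.lt_succ_iff.mp (mem_range.mp hi)
  rw [iteratedDerivWithin_rpow_const hs hx (hpos x hx).ne', Nat.cast_sub hik,
    show q - (k - i : ℝ) = (q - k) + i by ring, Real.rpow_add (hpos x hx), Real.rpow_natCast]
  ring

theorem descPochhammer_eval_ne_zero {q : ℝ} {k : ℕ} (hq : ∀ n < k, q ≠ n) :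
    (descPochhammer ℝ k).eval q ≠ 0 := by
  rw [descPochhammer_eval_eq_prod_range]
  exact prod_ne_zero_iff.mpr fun i hi => sub_ne_zero_of_ne (hq i (mem_range.mp hi))

/-- Lemma `equiv`: let `q ∈ ℝ` not be a nonnegative integer and
`f : (0, t₀) → ℝ` an `m` times differentiable function with
`f(t)/t^q → f₀ ≠ 0` as `t → 0⁺`; set `g(t) = t^{-q} f(t)`.  Then
`t^k g^{(k)}(t) → 0` for all `1 ≤ k ≤ m` if and only if
`f^{(k)}(t) / (d^k/dt^k)(f₀ t^q) → 1` for all `1 ≤ k ≤ m`,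
where `(d^k/dt^k)(f₀ t^q) = f₀ · q(q-1)⋯(q-k+1) · t^{q-k}`. -/
theorem asymptotic_derivative_equivalence
    (t0 q f0 : ℝ) (ht0 : 0 < t0) (hq : ∀ n : ℕ, q ≠ n) (m : ℕ)
    (f : ℝ → ℝ)
    (hf : ContDiffOn ℝ m f (Set.Ioo 0 t0))
    (hf0 : f0 ≠ 0)
    (hlim : Filter.Tendsto (fun t => f t / t ^ q)
      (nhdsWithin 0 (Set.Ioi 0)) (nhds f0)) :
    (∀ k : ℕ, 1 ≤ k → k ≤ m →
        Filter.Tendsto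
          (fun t => t ^ k *
            iteratedDerivWithin k (fun t => f t / t ^ q) (Set.Ioo 0 t0) t)
          (nhdsWithin 0 (Set.Ioi 0)) (nhds 0)) ↔
    (∀ k : ℕ, 1 ≤ k → k ≤ m →
        Filter.Tendsto
          (fun t => iteratedDerivWithin k f (Set.Ioo 0 t0) t /
            (f0 * (∏ i ∈ Finset.range k, (q - (i : ℝ))) * t ^ (q - (k : ℝ))))
          (nhdsWithin 0 (Set.Ioi 0)) (nhds 1)) := by
  set P : ℕ → ℝ := fun n => (descPochhammer ℝ n).eval q
  have hnear : ∀ᶠ t in 𝓝[>] 0, t ∈ Ioo 0 t0 := Ioo_mem_nhdsGT ht0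
  rw [tendsto_zero_iff_tendsto_triangular_sum (fun k i => k.choose i * P (k - i))
    (fun k => by simp [P]) (by simpa using hlim) m]
  refine forall_congr' fun k => forall_congr' fun _ => forall_congr' fun hkm => ?_
  have hPk : f0 * P k ≠ 0 := mul_ne_zero hf0 (descPochhammer_eval_ne_zero fun n _ => hq n)
  have hlimit : k.choose 0 * P (k - 0) * f0 = f0 * P k := by simp [mul_comm]
  rw [hlimit, ← tendsto_div_const_iff₀ hPk, div_self hPk, ← descPochhammer_eval_eq_prod_range]
  refine tendsto_congr' ?_
  filter_upwards [hnear] with t ht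
  have htq : t ^ (q - k) ≠ 0 := (Real.rpow_pos_of_pos ht.1 _).ne'
  rw [iteratedDerivWithin_eq_rpow_mul_sum (uniqueDiffOn_Ioo 0 t0) Ioo_subset_Ioi_self
    (hf.of_le (Nat.cast_le.mpr hkm)) ht q, mul_comm _ (t ^ (q - k)), mul_div_mul_left _ _ htq]
end
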